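/- Let E be a complex vector space, let F, G : ℕ → E be finitely supported families of vectors, and let H ∈ E. Consider the bipartite state ψ' = Σ_{m ≥ 1} (x^m ⊗ F(m) + y^m ⊗ G(m)) + 1 ⊗ H in ℂ[x,y] ⊗ E. If ψ' has zero probability of a photon in the |−⟩ mode (i.e., for every pair (j,k) with k ≥ 1, the E-coefficient of the monomial u^j v^k in (h ⊗ id) ψ' is zero), then F(1) = G(1) and F(m) = G(m) = 0 for all m ≥ 2. -/

import Mathlib

open MvPolynomial TensorProduct

/-- The `E`-coefficient of the monomial `X 0 ^ j * X 1 ^ k` of an element of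
`ℂ[X 0, X 1] ⊗[ℂ] E`. -/
noncomputable def Ecoeff (E : Type*) [AddCommGroup E] [Module ℂ E] (j k : ℕ) :
    MvPolynomial (Fin 2) ℂ ⊗[ℂ] E →ₗ[ℂ] E :=
  TensorProduct.lift
    ((LinearMap.lsmul ℂ E).comp
      (MvPolynomial.lcoeff ℂ (Finsupp.single 0 j + Finsupp.single 1 k)))

/-- The Hadamard mode change: the `ℂ`-algebra substitution `x ↦ (u − v)/√2`,
`y ↦ (u + v)/√2`, where `x = X 0`, `y = X 1` in the source and `u = X 0`,
`v = X 1` in the target. -/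
noncomputable def hadamard : MvPolynomial (Fin 2) ℂ →ₐ[ℂ] MvPolynomial (Fin 2) ℂ :=
  MvPolynomial.aeval
    ![((Real.sqrt 2 : ℂ))⁻¹ • ((X 0 : MvPolynomial (Fin 2) ℂ) - X 1),
      ((Real.sqrt 2 : ℂ))⁻¹ • ((X 0 : MvPolynomial (Fin 2) ℂ) + X 1)]

/-- `ψ` has zero probability of a photon in the `|−⟩` mode: for every `(j,k)`
with `k ≥ 1`, the `E`-coefficient of `u^j v^k` in `(h ⊗ id) ψ` is zero. -/
def NoMinusPhoton {E : Type*} [AddCommGroup E] [Module ℂ E]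
    (ψ : MvPolynomial (Fin 2) ℂ ⊗[ℂ] E) : Prop :=
  ∀ j k : ℕ, 1 ≤ k → Ecoeff E j k (LinearMap.rTensor E hadamard.toLinearMap ψ) = 0

lemma finsupp_pair_eq (a b j k : ℕ) :
    (Finsupp.single (0 : Fin 2) a + Finsupp.single 1 b
      = Finsupp.single 0 j + Finsupp.single 1 k) ↔ a = j ∧ b = k := by
  constructor
  · intro h
    have h0 := DFunLike.congr_fun h 0
    have h1 := DFunLike.congr_fun h 1
    simp [Finsupp.single_apply] at h0 h1
    exact ⟨h0, h1⟩
  · rintro ⟨rfl, rfl⟩; rfl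

lemma coeff_add_C_mul_pow (a : ℂ) (j k m : ℕ) :
    coeff (Finsupp.single 0 j + Finsupp.single 1 k)
      (((X 0 : MvPolynomial (Fin 2) ℂ) + C a * X 1) ^ m)
      = if j + k = m then a ^ k * m.choose k else 0 := by
  have hterm : ∀ i : ℕ, (X 0 : MvPolynomial (Fin 2) ℂ) ^ i * (C a * X 1) ^ (m - i)
      * (m.choose i : MvPolynomial (Fin 2) ℂ)
      = monomial (Finsupp.single 0 i + Finsupp.single 1 (m - i))
          (a ^ (m - i) * m.choose i) := by
    intro i
    rw [mul_pow, ← C_pow, X_pow_eq_monomial, X_pow_eq_monomial]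
    rw [show ((m.choose i : ℕ) : MvPolynomial (Fin 2) ℂ) = C ((m.choose i : ℕ) : ℂ) by
      simp]
    rw [C_apply, C_apply]
    simp only [monomial_mul, add_zero, zero_add, one_mul, mul_one]
  rw [add_pow, coeff_sum]
  simp only [hterm, coeff_monomial, finsupp_pair_eq]
  by_cases h : j + k = m
  · rw [if_pos h]
    rw [Finset.sum_eq_single_of_mem j (by simp; omega)]
    · rw [if_pos ⟨rfl, by omega⟩]
      have h1 : m - j = k := by omega
      have h2 : m.choose j = m.choose k := by
        rw [show j = m - k by omega]; exact Nat.choose_symm (by omega)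
      rw [h1, h2]
    · intro i hi hne
      rw [if_neg]
      rintro ⟨rfl, -⟩; exact hne rfl
  · rw [if_neg h]
    apply Finset.sum_eq_zero
    intro i hi
    rw [if_neg]
    rintro ⟨rfl, rfl⟩
    simp only [Finset.mem_range] at hi
    omega

noncomputable def cc : ℂ := ((Real.sqrt 2 : ℂ))⁻¹

lemma cc_ne_zero : cc ≠ 0 := by
  simp only [cc, ne_eq, inv_eq_zero, Complex.ofReal_eq_zero]
  positivity

lemma coeff_hadamard_X0_pow (j k m : ℕ) :
    coeff (Finsupp.single 0 j + Finsupp.single 1 k) (hadamard ((X 0 : MvPolynomial (Fin 2) ℂ) ^ m))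
      = if j + k = m then cc ^ m * ((-1 : ℂ) ^ k * m.choose k) else 0 := by
  have h1 : hadamard ((X 0 : MvPolynomial (Fin 2) ℂ) ^ m)
      = cc ^ m • (((X 0 : MvPolynomial (Fin 2) ℂ) + C (-1) * X 1) ^ m) := by
    rw [map_pow, ← smul_pow]
    congr 1
    simp only [hadamard, aeval_X, Matrix.cons_val_zero, cc]
    congr 1
    rw [map_neg, map_one, neg_one_mul, ← sub_eq_add_neg]
  rw [h1, coeff_smul, coeff_add_C_mul_pow, smul_eq_mul]
  split <;> simp

lemma coeff_hadamard_X1_pow (j k m : ℕ) :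
    coeff (Finsupp.single 0 j + Finsupp.single 1 k) (hadamard ((X 1 : MvPolynomial (Fin 2) ℂ) ^ m))
      = if j + k = m then cc ^ m * ((1 : ℂ) ^ k * m.choose k) else 0 := by
  have h1 : hadamard ((X 1 : MvPolynomial (Fin 2) ℂ) ^ m)
      = cc ^ m • (((X 0 : MvPolynomial (Fin 2) ℂ) + C 1 * X 1) ^ m) := by
    rw [map_pow, ← smul_pow]
    congr 1
    simp only [hadamard, aeval_X, Matrix.cons_val_one, Matrix.head_cons, Matrix.cons_val_zero, cc]
    congr 1
    rw [map_one, one_mul]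
  rw [h1, coeff_smul, coeff_add_C_mul_pow, smul_eq_mul]
  split <;> simp

lemma Ecoeff_tmul {E : Type*} [AddCommGroup E] [Module ℂ E] (j k : ℕ)
    (p : MvPolynomial (Fin 2) ℂ) (v : E) :
    Ecoeff E j k (p ⊗ₜ[ℂ] v) = coeff (Finsupp.single 0 j + Finsupp.single 1 k) p • v := rfl

/-- If `ψ' = Σ_{m ≥ 1} (x^m ⊗ F m + y^m ⊗ G m) + 1 ⊗ H` has zero probability of
a photon in the `|−⟩` mode, then `F 1 = G 1` and `F m = G m = 0` for all `m ≥ 2`. -/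
theorem stmt0 {E : Type*} [AddCommGroup E] [Module ℂ E]
    (F G : ℕ → E) (hF : (Function.support F).Finite) (hG : (Function.support G).Finite)
    (H : E) (ψ : MvPolynomial (Fin 2) ℂ ⊗[ℂ] E)
    (hψ : ψ = (∑ᶠ m ∈ Set.Ici 1, ((X 0 : MvPolynomial (Fin 2) ℂ) ^ m) ⊗ₜ[ℂ] F m)
        + (∑ᶠ m ∈ Set.Ici 1, ((X 1 : MvPolynomial (Fin 2) ℂ) ^ m) ⊗ₜ[ℂ] G m)
        + (1 : MvPolynomial (Fin 2) ℂ) ⊗ₜ[ℂ] H)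
    (hzero : NoMinusPhoton ψ) :
    F 1 = G 1 ∧ ∀ m : ℕ, 2 ≤ m → F m = 0 ∧ G m = 0 := by
  classical
  set T : Finset ℕ := (hF.toFinset ∪ hG.toFinset).filter (fun m => 1 ≤ m) with hTdef
  have hFsum : (∑ᶠ m ∈ Set.Ici 1, ((X 0 : MvPolynomial (Fin 2) ℂ) ^ m) ⊗ₜ[ℂ] F m)
      = ∑ m ∈ T, ((X 0 : MvPolynomial (Fin 2) ℂ) ^ m) ⊗ₜ[ℂ] F m := by
    apply finsum_mem_eq_sum_of_subset
    · rintro m ⟨hm1, hm2⟩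
      rw [Finset.mem_coe, hTdef, Finset.mem_filter, Finset.mem_union]
      refine ⟨Or.inl ((Set.Finite.mem_toFinset hF).mpr ?_), hm1⟩
      intro h0
      exact hm2 (by simp [Function.mem_support, h0])
    · intro m hm
      simp only [hTdef, Finset.coe_filter, Set.mem_setOf_eq] at hm
      exact hm.2
  have hGsum : (∑ᶠ m ∈ Set.Ici 1, ((X 1 : MvPolynomial (Fin 2) ℂ) ^ m) ⊗ₜ[ℂ] G m)
      = ∑ m ∈ T, ((X 1 : MvPolynomial (Fin 2) ℂ) ^ m) ⊗ₜ[ℂ] G m := by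
    apply finsum_mem_eq_sum_of_subset
    · rintro m ⟨hm1, hm2⟩
      rw [Finset.mem_coe, hTdef, Finset.mem_filter, Finset.mem_union]
      refine ⟨Or.inr ((Set.Finite.mem_toFinset hG).mpr ?_), hm1⟩
      intro h0
      exact hm2 (by simp [Function.mem_support, h0])
    · intro m hm
      simp only [hTdef, Finset.coe_filter, Set.mem_setOf_eq] at hm
      exact hm.2
  have key : ∀ j k : ℕ, 1 ≤ k →
      (cc ^ (j + k) * ((-1 : ℂ) ^ k * ((j + k).choose k))) • F (j + k)
        + (cc ^ (j + k) * ((1 : ℂ) ^ k * ((j + k).choose k))) • G (j + k) = 0 := by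
    intro j k hk
    have h0 := hzero j k hk
    have hone : coeff (Finsupp.single 0 j + Finsupp.single 1 k)
        (hadamard (1 : MvPolynomial (Fin 2) ℂ)) = 0 := by
      rw [map_one, coeff_one, if_neg]
      intro h
      have := DFunLike.congr_fun h 1
      simp [Finsupp.single_apply] at this
      omega
    rw [hψ, hFsum, hGsum] at h0
    simp only [map_add, map_sum, LinearMap.rTensor_tmul, AlgHom.toLinearMap_apply,
      Ecoeff_tmul, hone, zero_smul, add_zero, coeff_hadamard_X0_pow, coeff_hadamard_X1_pow,
      ite_smul, Finset.sum_ite_eq, hTdef] at h0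
    by_cases hmem : j + k ∈ T
    · rw [hTdef] at hmem
      rw [if_pos hmem, if_pos hmem] at h0
      exact h0
    · have hmem' : ¬ (F (j + k) ≠ 0 ∨ G (j + k) ≠ 0) := by
        intro hor
        apply hmem
        rw [hTdef, Finset.mem_filter, Finset.mem_union]
        refine ⟨?_, by omega⟩
        rcases hor with h | h
        · exact Or.inl ((Set.Finite.mem_toFinset hF).mpr h)
        · exact Or.inr ((Set.Finite.mem_toFinset hG).mpr h)
      push_neg at hmem'
      rw [hmem'.1, hmem'.2, smul_zero, smul_zero, add_zero]
  have key' : ∀ j k : ℕ, 1 ≤ k → ((-1 : ℂ) ^ k) • F (j + k) + G (j + k) = 0 := by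
    intro j k hk
    have h0 := key j k hk
    set n := j + k with hn
    have hch : ((n.choose k : ℕ) : ℂ) ≠ 0 := by
      simp only [ne_eq, Nat.cast_eq_zero]
      exact Nat.choose_pos (by omega) |>.ne'
    have hc : (cc ^ n : ℂ) ≠ 0 := pow_ne_zero _ cc_ne_zero
    have h2 := congrArg (fun z => ((cc ^ n * (n.choose k : ℂ))⁻¹) • z) h0
    simp only [smul_add, smul_smul, smul_zero] at h2
    have e1 : (cc ^ n * ((n.choose k : ℕ) : ℂ))⁻¹ * (cc ^ n * ((-1 : ℂ) ^ k * ((n.choose k : ℕ) : ℂ)))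
        = (-1 : ℂ) ^ k := by field_simp
    have e2 : (cc ^ n * ((n.choose k : ℕ) : ℂ))⁻¹ * (cc ^ n * ((1 : ℂ) ^ k * ((n.choose k : ℕ) : ℂ)))
        = 1 := by field_simp; simp
    rw [e1, e2, one_smul] at h2
    exact h2
  constructor
  · have h1 := key' 0 1 le_rfl
    simp only [zero_add, pow_one, neg_one_smul] at h1
    exact neg_add_eq_zero.mp h1
  · intro m hm
    have h1 := key' (m - 1) 1 le_rfl
    have h2 := key' (m - 2) 2 (by omega)
    rw [show m - 1 + 1 = m by omega] at h1
    rw [show m - 2 + 2 = m by omega] at h2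
    simp only [pow_one, neg_one_smul, neg_one_sq, one_smul] at h1 h2
    have hG1 : F m = G m := neg_add_eq_zero.mp h1
    rw [← hG1, ← two_smul ℂ] at h2
    have hF0 : F m = 0 := by
      rcases smul_eq_zero.mp h2 with h | h
      · exact absurd h (by norm_num)
      · exact h
    exact ⟨hF0, by rw [← hG1]; exact hF0⟩
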